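/- arXiv:1710.02328 — 2 statements merged into one kernel-verified Lean document; each statement's English description precedes it below -/
import Mathlib

section
/- If A is a commutative k-algebra that is separable, i.e., the multiplication map A ⊗_k A → A has a section as a map of A-bimodules, then the module of Kähler differentials Ω¹_{A|k} is zero. -/
/-!
With `I = ker μ`, the element `e = 1 - s 1` lies in `I`, and `s (a * b) = (a ⊗ b) * s 1` gives
`z * s 1 = s (μ z)` for every `z`, so `z * e = z` on `I`. Hence `I = I²` and `Ω¹ = I/I² = 0`.
-/

open scoped TensorProduct

theorem Ideal.isIdempotentElem_of_mem_of_forall_mul_eq {R : Type*} [CommSemiring R]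
    {I : Ideal R} {e : R} (he : e ∈ I) (h : ∀ z ∈ I, z * e = z) : IsIdempotentElem I := by
  refine le_antisymm Ideal.mul_le_right fun z hz => ?_
  rw [← h z hz]
  exact Ideal.mul_mem_mul hz he

section Separable

variable {k A : Type*} [CommRing k] [CommRing A] [Algebra k A] {s : A →ₗ[k] A ⊗[k] A}

theorem mul_apply_one_eq_apply_lmul' (hbimod : ∀ a b x : A, s (a * x * b) = (a ⊗ₜ[k] b) * s x)
    (z : A ⊗[k] A) : z * s 1 = s (Algebra.TensorProduct.lmul' k z) := by
  induction z using TensorProduct.induction_on with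
  | zero => simp
  | tmul a b => simpa using (hbimod a b 1).symm
  | add x y hx hy => rw [add_mul, map_add, map_add, hx, hy]

theorem one_sub_apply_one_mem_kaehlerDifferential_ideal
    (hsec : ∀ x : A, Algebra.TensorProduct.lmul' k (s x) = x) :
    1 - s 1 ∈ KaehlerDifferential.ideal k A := by
  simp [KaehlerDifferential.ideal, hsec]

end Separable

/-- If a commutative `k`-algebra `A` is separable, i.e. the multiplication map
`μ : A ⊗_k A → A` has a section as a map of `A`-bimodules, then the module of Kähler
differentials `Ω¹_{A|k}` is zero. -/
theorem kaehler_eq_zero_of_separable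
    (k A : Type*) [CommRing k] [CommRing A] [Algebra k A]
    (s : A →ₗ[k] A ⊗[k] A)
    (hsec : ∀ x : A, Algebra.TensorProduct.lmul' k (s x) = x)
    (hbimod : ∀ a b x : A, s (a * x * b) = (a ⊗ₜ[k] b) * s x) :
    Subsingleton (Ω[A⁄k]) := by
  rw [KaehlerDifferential, Ideal.cotangent_subsingleton_iff]
  refine Ideal.isIdempotentElem_of_mem_of_forall_mul_eq
    (one_sub_apply_one_mem_kaehlerDifferential_ideal hsec) fun z hz => ?_
  have hμz : Algebra.TensorProduct.lmul' k z = 0 := hz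
  rw [mul_sub, mul_one, mul_apply_one_eq_apply_lmul' hbimod, hμz, map_zero, sub_zero]
end

section
/- The map h : ℤ[1/2, i] ⊗_{ℤ[1/2]} ℤ[1/2, i] → ℤ[1/2, i] × ℤ[1/2, i], given by h(a ⊗ b) = (a·b, a·σ(b)) where σ is complex conjugation, is an isomorphism. -/
open Polynomial
open scoped TensorProduct

/-- `ℤ[1/2]`. -/
abbrev ZHalf : Type := Localization.Away (2 : ℤ)

/-- `ℤ[1/2, i] = ℤ[1/2][x]/(x² + 1)`. -/
abbrev ZHalfI : Type := AdjoinRoot ((X : ZHalf[X]) ^ 2 + 1)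

/-- Complex conjugation on `ℤ[1/2, i]`, sending `i` to `-i`. -/
noncomputable def conjZHalfI : ZHalfI →ₐ[ZHalf] ZHalfI :=
  AdjoinRoot.liftAlgHom ((X : ZHalf[X]) ^ 2 + 1) (Algebra.ofId _ _) (-(AdjoinRoot.root _)) (by
    have h : (Polynomial.aeval (AdjoinRoot.root ((X : ZHalf[X]) ^ 2 + 1)))
        ((X : ZHalf[X]) ^ 2 + 1) = 0 := by
      rw [AdjoinRoot.aeval_eq, AdjoinRoot.mk_self]
    show (Polynomial.aeval (-(AdjoinRoot.root ((X : ZHalf[X]) ^ 2 + 1))))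
        ((X : ZHalf[X]) ^ 2 + 1) = 0
    simp only [map_add, map_pow, map_one, Polynomial.aeval_X, neg_sq] at h ⊢
    exact h)

/-- The map `h : ℤ[1/2, i] ⊗_{ℤ[1/2]} ℤ[1/2, i] → ℤ[1/2, i] × ℤ[1/2, i]`,
`a ⊗ b ↦ (a·b, a·σ(b))`. -/
noncomputable def galoisMapZHalfI :
    ZHalfI ⊗[ZHalf] ZHalfI →ₐ[ZHalf] ZHalfI × ZHalfI :=
  AlgHom.prod (Algebra.TensorProduct.lmul' ZHalf)
    (Algebra.TensorProduct.productMap (AlgHom.id ZHalf ZHalfI) conjZHalfI)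

/-! The algebra `A ⊗ A` splits along the idempotents `e₁ = (1 ⊗ 1 - i ⊗ i) / 2` and
`e₂ = (1 ⊗ 1 + i ⊗ i) / 2`, which the map sends to `(1, 0)` and `(0, 1)`. Multiplied by `e₁`,
the elements `1 ⊗ i` and `i ⊗ 1` agree, and multiplied by `e₂`, `1 ⊗ i` agrees with `σ i ⊗ 1`;
as `i` generates `A`, this gives `t e₁ = (x ⊗ 1) e₁` and `t e₂ = (y ⊗ 1) e₂` whenever `t` maps
to `(x, y)`. Hence `(x, y) ↦ (x ⊗ 1) e₁ + (y ⊗ 1) e₂` is an inverse. -/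

theorem AlgHom.mul_eq_mul_of_adjoin_singleton_eq_top {R A B : Type*} [CommSemiring R]
    [Semiring A] [CommSemiring B] [Algebra R A] [Algebra R B] {i : A}
    (hgen : Algebra.adjoin R {i} = ⊤) (φ ψ : A →ₐ[R] B) (e : B) (hi : φ i * e = ψ i * e) (b : A) :
    φ b * e = ψ b * e := by
  induction (hgen ▸ Algebra.mem_top : b ∈ Algebra.adjoin R {i}) using Algebra.adjoin_induction with
  | mem x hx => rwa [Set.mem_singleton_iff.1 hx]
  | algebraMap r => simp
  | add x y _ _ hx hy => simp only [map_add, add_mul, hx, hy]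
  | mul x y _ _ hx hy =>
    calc φ (x * y) * e = φ x * (φ y * e) := by rw [map_mul, mul_assoc]
      _ = ψ y * (φ x * e) := by rw [hy, mul_left_comm]
      _ = ψ (x * y) * e := by rw [hx, map_mul, mul_left_comm, mul_assoc]

namespace Algebra.TensorProduct

variable {R A : Type*} [CommSemiring R] [CommRing A] [Algebra R A]

noncomputable def galoisMap (σ : A →ₐ[R] A) : A ⊗[R] A →ₐ[R] A × A :=
  (lmul' R).prod (productMap (AlgHom.id R A) σ)

@[simp]
theorem galoisMap_tmul (σ : A →ₐ[R] A) (a b : A) :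
    galoisMap σ (a ⊗ₜ b) = (a * b, a * σ b) := by
  simp [galoisMap]

theorem lmul'_eq_productMap_id :
    lmul' R (S := A) = productMap (AlgHom.id R A) (AlgHom.id R A) := by
  ext <;> simp

theorem mul_eq_productMap_tmul_one_mul {e : A ⊗[R] A} (τ : A →ₐ[R] A)
    (he : ∀ b : A, (1 : A) ⊗ₜ b * e = τ b ⊗ₜ 1 * e) (t : A ⊗[R] A) :
    t * e = productMap (AlgHom.id R A) τ t ⊗ₜ 1 * e := by
  induction t using TensorProduct.induction_on with
  | zero => simp
  | tmul a b =>
    calc a ⊗ₜ b * e = a ⊗ₜ 1 * ((1 : A) ⊗ₜ b * e) := by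
          rw [← mul_assoc, tmul_mul_tmul, mul_one, one_mul]
      _ = _ := by
          rw [he, ← mul_assoc, tmul_mul_tmul, mul_one, productMap_apply_tmul, AlgHom.id_apply]
  | add x y hx hy => rw [add_mul, hx, hy, map_add, TensorProduct.add_tmul, add_mul]

section Idempotents

variable [Invertible (2 : A)] {i : A}

noncomputable def galoisIdempotentFst (i : A) : A ⊗[R] A := ⅟2 ⊗ₜ 1 - (⅟2 * i) ⊗ₜ i

noncomputable def galoisIdempotentSnd (i : A) : A ⊗[R] A := ⅟2 ⊗ₜ 1 + (⅟2 * i) ⊗ₜ i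

theorem galoisIdempotentFst_add_galoisIdempotentSnd :
    galoisIdempotentFst (R := R) i + galoisIdempotentSnd i = 1 := by
  rw [galoisIdempotentFst, galoisIdempotentSnd, sub_add_add_cancel, ← TensorProduct.add_tmul,
    invOf_two_add_invOf_two, one_def]

theorem mul_invOf_two_mul_self (hi : i * i = -1) : i * (⅟2 * i) = -⅟2 := by
  rw [mul_left_comm, hi, mul_neg_one]

theorem one_tmul_mul_galoisIdempotentFst (hi : i * i = -1) (hgen : Algebra.adjoin R {i} = ⊤)
    (b : A) : (1 : A) ⊗ₜ[R] b * galoisIdempotentFst i = b ⊗ₜ 1 * galoisIdempotentFst i := by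
  refine AlgHom.mul_eq_mul_of_adjoin_singleton_eq_top (B := A ⊗[R] A) hgen includeRight
    (includeLeft (S := R)) _ ?_ b
  simp only [includeRight_apply, includeLeft_apply, galoisIdempotentFst, mul_sub, tmul_mul_tmul,
    hi, mul_invOf_two_mul_self hi, mul_one, one_mul, mul_comm i, TensorProduct.tmul_neg,
    TensorProduct.neg_tmul]
  abel

theorem one_tmul_mul_galoisIdempotentSnd (hi : i * i = -1) (hgen : Algebra.adjoin R {i} = ⊤)
    {σ : A →ₐ[R] A} (hσ : σ i = -i) (b : A) :
    (1 : A) ⊗ₜ[R] b * galoisIdempotentSnd i = σ b ⊗ₜ 1 * galoisIdempotentSnd i := by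
  refine AlgHom.mul_eq_mul_of_adjoin_singleton_eq_top (B := A ⊗[R] A) hgen
    includeRight ((includeLeft (S := R)).comp σ) _ ?_ b
  simp only [AlgHom.comp_apply, hσ, includeRight_apply, includeLeft_apply, galoisIdempotentSnd,
    mul_add, tmul_mul_tmul, hi, neg_mul, mul_invOf_two_mul_self hi, mul_one, one_mul, mul_comm i,
    TensorProduct.tmul_neg, TensorProduct.neg_tmul]
  abel

theorem galoisMap_galoisIdempotentFst (hi : i * i = -1) {σ : A →ₐ[R] A} (hσ : σ i = -i) :
    galoisMap σ (galoisIdempotentFst i) = (1, 0) := by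
  rw [galoisIdempotentFst, map_sub, galoisMap_tmul, galoisMap_tmul, map_one, hσ]
  ext
  · simp only [Prod.fst_sub, mul_one, mul_assoc, hi, mul_neg_one, sub_neg_eq_add,
      invOf_two_add_invOf_two]
  · simp only [Prod.snd_sub, mul_one, mul_neg, mul_assoc, hi, neg_neg, sub_self]

theorem galoisMap_galoisIdempotentSnd (hi : i * i = -1) {σ : A →ₐ[R] A} (hσ : σ i = -i) :
    galoisMap σ (galoisIdempotentSnd i) = (0, 1) := by
  rw [galoisIdempotentSnd, map_add, galoisMap_tmul, galoisMap_tmul, map_one, hσ]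
  ext
  · simp only [Prod.fst_add, mul_one, mul_assoc, hi, mul_neg_one, add_neg_cancel]
  · simp only [Prod.snd_add, mul_one, mul_neg, mul_assoc, hi, neg_neg, invOf_two_add_invOf_two]

theorem galoisMap_bijective (hi : i * i = -1) (hgen : Algebra.adjoin R {i} = ⊤)
    {σ : A →ₐ[R] A} (hσ : σ i = -i) : Function.Bijective (galoisMap σ) := by
  refine Function.bijective_iff_has_inverse.2
    ⟨fun p ↦ p.1 ⊗ₜ 1 * galoisIdempotentFst i + p.2 ⊗ₜ 1 * galoisIdempotentSnd i,
      fun t ↦ ?_, fun p ↦ ?_⟩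
  · calc (galoisMap σ t).1 ⊗ₜ 1 * galoisIdempotentFst i
          + (galoisMap σ t).2 ⊗ₜ 1 * galoisIdempotentSnd i
        = t * galoisIdempotentFst i + t * galoisIdempotentSnd i := by
          rw [mul_eq_productMap_tmul_one_mul (AlgHom.id R A)
              (one_tmul_mul_galoisIdempotentFst hi hgen) t,
            mul_eq_productMap_tmul_one_mul σ (one_tmul_mul_galoisIdempotentSnd hi hgen hσ) t,
            galoisMap, lmul'_eq_productMap_id]
          rfl
      _ = t := by rw [← mul_add, galoisIdempotentFst_add_galoisIdempotentSnd, mul_one]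
  · simp only [map_add, map_mul, galoisMap_tmul, galoisMap_galoisIdempotentFst hi hσ,
      galoisMap_galoisIdempotentSnd hi hσ, map_one, Prod.mk_mul_mk, Prod.mk_add_mk, mul_one,
      mul_zero, zero_add, add_zero]

end Idempotents

end Algebra.TensorProduct

theorem isUnit_two_zHalfI : IsUnit (2 : ZHalfI) := by
  have h := (IsLocalization.Away.algebraMap_isUnit (2 : ℤ) : IsUnit (algebraMap ℤ ZHalf 2)).map
    (algebraMap ZHalf ZHalfI)
  rwa [map_ofNat, map_ofNat] at h

theorem root_mul_root_zHalfI :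
    AdjoinRoot.root ((X : ZHalf[X]) ^ 2 + 1) * AdjoinRoot.root _ = -1 := by
  have h := AdjoinRoot.eval₂_root ((X : ZHalf[X]) ^ 2 + 1)
  simp only [eval₂_add, eval₂_X_pow, eval₂_one] at h
  linear_combination h

theorem conjZHalfI_root : conjZHalfI (AdjoinRoot.root _) = -AdjoinRoot.root _ :=
  AdjoinRoot.liftAlgHom_root ..

/-- The map `h : ℤ[1/2, i] ⊗_{ℤ[1/2]} ℤ[1/2, i] → ℤ[1/2, i] × ℤ[1/2, i]`,
`a ⊗ b ↦ (a·b, a·σ(b))`, is an isomorphism. -/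
theorem galoisMapZHalfI_bijective : Function.Bijective galoisMapZHalfI :=
  have := isUnit_two_zHalfI.invertible
  Algebra.TensorProduct.galoisMap_bijective root_mul_root_zHalfI AdjoinRoot.adjoinRoot_eq_top
    conjZHalfI_root
end
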